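/- Let G be a connected graph with a cut vertex v, and let H be a connected component of G − v such that the induced subgraph G[V(H) ∪ {v}] is biconnected with at most d vertices and belongs to a block-hereditary class P. Then for every k ≥ 0: G has a set S of at most k vertices such that every block of G − S with an edge is in P and has at most d vertices, if and only if the graph G − V(H) has such a set of at most k vertices. -/

import Mathlib

open SimpleGraph

def PreconnOn {V : Type} (G : SimpleGraph V) (B : Set V) : Prop :=
  (G.induce B).Preconnected

def ConnOn {V : Type} (G : SimpleGraph V) (B : Set V) : Prop :=
  (G.induce B).Connected

def BiconnOn {V : Type} (G : SimpleGraph V) (B : Set V) : Prop :=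
  ConnOn G B ∧ ∀ v ∈ B, PreconnOn G (B \ {v})

/-- `B` is a block of the induced subgraph `G[W]`. -/
def IsBlockIn {V : Type} (G : SimpleGraph V) (W B : Set V) : Prop :=
  B ⊆ W ∧ BiconnOn G B ∧ ∀ C : Set V, B ⊆ C → C ⊆ W → BiconnOn G C → C = B

def HasEdgeIn {V : Type} (G : SimpleGraph V) (B : Set V) : Prop :=
  ∃ u ∈ B, ∃ v ∈ B, G.Adj u v

/-!
Every biconnected set meeting the component `H` of `G - v` lies in `H ∪ {v}`, since removing
`v` leaves it connected. Hence a block of `G - S` either lies in the block `G[H ∪ {v}]`, where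
it is a block of an induced subgraph of a member of `P`, or avoids `H` and is a block of
`G - H - S`. Conversely a block of `G - H - S` with an edge cannot grow into `H`, so it is still
a block of `G - S`: a solution `S` for `G` yields the solution `S \ H` for `G - H`.
-/

variable {V : Type} {G : SimpleGraph V}

lemma BiconnOn.preconnOn_diff_singleton {B : Set V} (hB : BiconnOn G B) (v : V) :
    PreconnOn G (B \ {v}) := by
  by_cases hvB : v ∈ B
  · exact hB.2 v hvB
  · rw [Set.sdiff_singleton_eq_self hvB]
    exact hB.1.preconnected

lemma IsBlockIn.of_subset {W W' B : Set V} (hB : IsBlockIn G W B) (hBW' : B ⊆ W')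
    (hW' : W' ⊆ W) : IsBlockIn G W' B :=
  ⟨hBW', hB.2.1, fun C hBC hCW' hC => hB.2.2 C hBC (hCW'.trans hW') hC⟩

lemma HasEdgeIn.not_subset_singleton {B : Set V} (hB : HasEdgeIn G B) (v : V) : ¬ B ⊆ {v} := by
  obtain ⟨u, hu, w, hw, huw⟩ := hB
  intro hBv
  exact huw.ne ((hBv hu).trans (hBv hw).symm)

section CutVertex

variable {H : Set V} {v : V}

lemma mem_of_reachable_induce (hHcomp : ∀ u ∈ H, ∀ w : V, w ≠ v → G.Adj u w → w ∈ H)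
    {T : Set V} (hvT : v ∉ T) {x y : T} (hxy : (G.induce T).Reachable x y) (hx : ↑x ∈ H) :
    ↑y ∈ H := by
  obtain ⟨p⟩ := hxy
  induction p with
  | nil => exact hx
  | cons hab _ ih => exact ih (hHcomp _ hx _ (fun h => hvT (h ▸ Subtype.prop _)) hab)

lemma BiconnOn.subset_insert_or_subset_compl (hvH : v ∉ H)
    (hHcomp : ∀ u ∈ H, ∀ w : V, w ≠ v → G.Adj u w → w ∈ H) {B : Set V} (hB : BiconnOn G B) :
    B ⊆ insert v H ∨ B ⊆ Hᶜ := by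
  by_cases hBH : ∃ h ∈ B, h ∈ H
  · obtain ⟨h, hhB, hhH⟩ := hBH
    have hhv : h ≠ v := fun e => hvH (e ▸ hhH)
    left
    intro w hwB
    by_cases hwv : w = v
    · exact hwv ▸ Set.mem_insert v H
    · have hreach := hB.preconnOn_diff_singleton v ⟨h, hhB, hhv⟩ ⟨w, hwB, hwv⟩
      exact Set.mem_insert_of_mem _
        (mem_of_reachable_induce hHcomp (fun hv => hv.2 rfl) hreach hhH)
  · right
    exact fun w hwB hwH => hBH ⟨w, hwB, hwH⟩

lemma IsBlockIn.of_compl_diff (hvH : v ∉ H)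
    (hHcomp : ∀ u ∈ H, ∀ w : V, w ≠ v → G.Adj u w → w ∈ H) {S B : Set V}
    (hB : IsBlockIn G (Hᶜ \ S) B) (hedge : HasEdgeIn G B) : IsBlockIn G Sᶜ B := by
  refine ⟨fun x hx => (hB.1 hx).2, hB.2.1, fun C hBC hCS hC => hB.2.2 C hBC ?_ hC⟩
  rcases hC.subset_insert_or_subset_compl hvH hHcomp with hCH | hCH
  · refine absurd (fun x hx => ?_) (hedge.not_subset_singleton v)
    exact (Set.mem_insert_iff.1 (hCH (hBC hx))).resolve_right (hB.1 hx).1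
  · exact fun x hx => ⟨hCH hx, hCS hx⟩

end CutVertex

theorem stmt12_general {V : Type} [Fintype V]
    (G : SimpleGraph V) (P : Set V → Prop) (d : ℕ)
    (hbh : ∀ B : Set V, P B → ∀ A : Set V, A ⊆ B →
      ∀ C : Set V, IsBlockIn G A C → HasEdgeIn G C → P C)
    (v : V)
    (H : Set V) (hvH : v ∉ H)
    (hHcomp : ∀ u ∈ H, ∀ w : V, w ≠ v → G.Adj u w → w ∈ H)
    (hsize : (insert v H).ncard ≤ d)
    (hP : P (insert v H))
    (k : ℕ) :
    (∃ S : Set V, S.ncard ≤ k ∧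
        ∀ B : Set V, IsBlockIn G Sᶜ B → HasEdgeIn G B → P B ∧ B.ncard ≤ d) ↔
      (∃ S : Set V, S ⊆ Hᶜ ∧ S.ncard ≤ k ∧
        ∀ B : Set V, IsBlockIn G (Hᶜ \ S) B → HasEdgeIn G B → P B ∧ B.ncard ≤ d) := by
  constructor
  · rintro ⟨S, hSk, hS⟩
    have hdiff : Hᶜ \ (S \ H) = Hᶜ \ S := by
      ext x
      simp only [Set.mem_sdiff, Set.mem_compl_iff]
      tauto
    refine ⟨S \ H, fun x hx => hx.2, (Set.ncard_le_ncard Set.sdiff_subset).trans hSk, ?_⟩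
    rw [hdiff]
    exact fun B hB hedge => hS B (hB.of_compl_diff hvH hHcomp hedge) hedge
  · rintro ⟨S, -, hSk, hS⟩
    refine ⟨S, hSk, fun B hB hedge => ?_⟩
    rcases hB.2.1.subset_insert_or_subset_compl hvH hHcomp with hBH | hBH
    · have hblock : IsBlockIn G (insert v H ∩ Sᶜ) B :=
        hB.of_subset (Set.subset_inter hBH hB.1) Set.inter_subset_right
      exact ⟨hbh _ hP _ Set.inter_subset_left B hblock hedge,
        (Set.ncard_le_ncard hBH).trans hsize⟩
    · exact hS B (hB.of_subset (fun x hx => ⟨hBH hx, hB.1 hx⟩) fun _ hx => hx.2) hedge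

/-- **safeness of the Cut Vertex Rule.** Let `G` be connected with a
cut vertex `v`, and let `H` be a connected component of `G − v` such that
`G[V(H) ∪ {v}]` is biconnected, has at most `d` vertices, and lies in the
non-degenerate block-hereditary class `𝒫` (represented by the predicate `P`).  Then
for every `k ≥ 0`, `G` has a set `S` of at most `k` vertices such that every block of
`G − S` with an edge is in `𝒫` and has at most `d` vertices iff `G − V(H)` has such a
set of at most `k` vertices. -/
theorem stmt12 {V : Type} [Fintype V] [DecidableEq V]
    (G : SimpleGraph V) (P : Set V → Prop) (d : ℕ)
    (hbicP : ∀ B : Set V, P B → BiconnOn G B)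
    (hK2 : ∀ u w : V, G.Adj u w → P {u, w})
    (hbh : ∀ B : Set V, P B → ∀ A : Set V, A ⊆ B →
      ∀ C : Set V, IsBlockIn G A C → HasEdgeIn G C → P C)
    (hconn : G.Connected)
    (v : V) (hcut : ¬ PreconnOn G {u : V | u ≠ v})
    (H : Set V) (hvH : v ∉ H) (hHconn : ConnOn G H)
    (hHcomp : ∀ u ∈ H, ∀ w : V, w ≠ v → G.Adj u w → w ∈ H)
    (hblock : BiconnOn G (insert v H))
    (hsize : (insert v H).ncard ≤ d)
    (hP : P (insert v H))
    (k : ℕ) :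
    (∃ S : Set V, S.ncard ≤ k ∧
        ∀ B : Set V, IsBlockIn G Sᶜ B → HasEdgeIn G B → P B ∧ B.ncard ≤ d) ↔
      (∃ S : Set V, S ⊆ Hᶜ ∧ S.ncard ≤ k ∧
        ∀ B : Set V, IsBlockIn G (Hᶜ \ S) B → HasEdgeIn G B → P B ∧ B.ncard ≤ d) :=
  stmt12_general G P d hbh v H hvH hHcomp hsize hP k
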